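/- The function g has exponential decay of variation: there exist constants C > 0 and ρ ∈ (0,1) such that for all y, ỹ ∈ {−1,1}^{ℤ₊} and all n ∈ ℕ, if y_i = ỹ_i for i = 0,…,n−1 then |g(y) − g(ỹ)| ≤ C·ρⁿ. -/

import Mathlib

/-! The map `A = halfLogCoshRatio J` is bounded by `|J|` and, its derivative being
`(tanh (u + J) - tanh (u - J)) / 2`, a contraction with constant `tanh |J| < 1`. The limiting
fields satisfy `w_i = K y_i + A (w_{i+1})`, so they lie in `[-R, R]` with `R = |K| + |J|`, and
if `y` and `ỹ` agree on their first `n` coordinates, iterating the contraction from the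
crude bound `2R` at index `n` gives `|w_k(y) - w_k(ỹ)| ≤ 2R tanh |J| ^ (n - k)`. Finally `g` is
a `C¹` function of `(w_0, w_1)`, hence Lipschitz on the compact square `[-R, R]²`. -/

open Real Filter Topology Set

lemma hasDerivAt_log_cosh (x : ℝ) : HasDerivAt (fun x => log (cosh x)) (tanh x) x := by
  simpa [tanh_eq_sinh_div_cosh] using (hasDerivAt_cosh x).log (cosh_pos x).ne'

lemma abs_log_cosh_sub_log_cosh_le (x y : ℝ) : |log (cosh x) - log (cosh y)| ≤ |x - y| := by
  simpa using Convex.norm_image_sub_le_of_norm_hasDerivWithin_le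
    (fun u _ => (hasDerivAt_log_cosh u).hasDerivWithinAt)
    (fun u _ => (abs_tanh_lt_one u).le) convex_univ (mem_univ y) (mem_univ x)

lemma abs_tanh_add_sub_tanh_sub_le (u J : ℝ) : |tanh (u + J) - tanh (u - J)| ≤ 2 * tanh |J| := by
  have hsub : tanh (u + J) - tanh (u - J)
      = sinh (2 * J) / (cosh (u + J) * cosh (u - J)) := by
    rw [tanh_eq_sinh_div_cosh, tanh_eq_sinh_div_cosh,
      div_sub_div _ _ (cosh_pos _).ne' (cosh_pos _).ne', ← sinh_sub]
    ring_nf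
  have hprod : cosh (u + J) * cosh (u - J) = sinh u ^ 2 + cosh J ^ 2 := by
    rw [cosh_add, cosh_sub]; nlinarith [cosh_sq u, sinh_sq J]
  have hJ := cosh_pos J
  rw [hsub, hprod, abs_div, abs_of_pos (by positivity : 0 < sinh u ^ 2 + cosh J ^ 2), sinh_two_mul,
    abs_mul, abs_mul, abs_two, abs_of_pos hJ, tanh_eq_sinh_div_cosh, cosh_abs, ← abs_sinh,
    div_le_iff₀ (by positivity)]
  field_simp
  nlinarith [mul_nonneg (abs_nonneg (sinh J)) (sq_nonneg (sinh u))]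

lemma tanh_abs_mem_Ioo {J : ℝ} (hJ : J ≠ 0) : tanh |J| ∈ Ioo 0 1 :=
  ⟨by rw [tanh_eq_sinh_div_cosh]; exact div_pos (sinh_pos_iff.2 (abs_pos.2 hJ)) (cosh_pos _),
    tanh_lt_one _⟩

noncomputable def halfLogCoshRatio (J u : ℝ) : ℝ := (1 / 2) * log (cosh (u + J) / cosh (u - J))

namespace halfLogCoshRatio

variable (J : ℝ)

lemma eq_sub (u : ℝ) :
    halfLogCoshRatio J u = (log (cosh (u + J)) - log (cosh (u - J))) / 2 := by
  rw [halfLogCoshRatio, log_div (cosh_pos _).ne' (cosh_pos _).ne']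
  ring

lemma hasDerivAt (u : ℝ) :
    HasDerivAt (halfLogCoshRatio J) ((tanh (u + J) - tanh (u - J)) / 2) u := by
  rw [show halfLogCoshRatio J = _ from funext (eq_sub J)]
  exact ((((hasDerivAt_log_cosh _).comp u ((hasDerivAt_id u).add_const J)).sub
    ((hasDerivAt_log_cosh _).comp u ((hasDerivAt_id u).sub_const J))).div_const 2).congr_deriv
    (by simp)

lemma continuous : Continuous (halfLogCoshRatio J) :=
  continuous_iff_continuousAt.2 fun u => (hasDerivAt J u).continuousAt

lemma abs_le (u : ℝ) : |halfLogCoshRatio J u| ≤ |J| := by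
  have h := abs_log_cosh_sub_log_cosh_le (u + J) (u - J)
  rw [show u + J - (u - J) = 2 * J by ring, abs_mul, abs_two] at h
  rw [eq_sub, abs_div, abs_two]
  linarith

lemma abs_sub_le (u v : ℝ) :
    |halfLogCoshRatio J u - halfLogCoshRatio J v| ≤ tanh |J| * |u - v| := by
  simpa using Convex.norm_image_sub_le_of_norm_hasDerivWithin_le
    (fun x _ => (hasDerivAt J x).hasDerivWithinAt)
    (fun x _ => by
      rw [norm_div, Real.norm_two, div_le_iff₀ two_pos, mul_comm]
      exact abs_tanh_add_sub_tanh_sub_le x J) convex_univ (mem_univ v) (mem_univ u)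

end halfLogCoshRatio

lemma le_mul_pow_sub_of_le_mul_succ {d : ℕ → ℝ} {ρ D : ℝ} {n : ℕ} (hρ : 0 ≤ ρ)
    (hD : ∀ k, d k ≤ D) (hstep : ∀ k < n, d k ≤ ρ * d (k + 1)) (k : ℕ) :
    d k ≤ D * ρ ^ (n - k) := by
  induction h : n - k generalizing k with
  | zero => simpa using hD k
  | succ j ih =>
    calc d k ≤ ρ * d (k + 1) := hstep k (by omega)
      _ ≤ ρ * (D * ρ ^ j) := mul_le_mul_of_nonneg_left (ih (k + 1) (by omega)) hρ
      _ = D * ρ ^ (j + 1) := by ring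

lemma eq_of_tendsto_of_eventually_eq {X Y ι : Type*} [TopologicalSpace X] [T2Space X]
    [TopologicalSpace Y] {l : Filter ι} [l.NeBot] {F : Y → X} (hF : Continuous F)
    {a : ι → X} {b : ι → Y} {x : X} {z : Y} (ha : Tendsto a l (𝓝 x)) (hb : Tendsto b l (𝓝 z))
    (hab : ∀ᶠ n in l, a n = F (b n)) : x = F z :=
  tendsto_nhds_unique ha (((hF.tendsto z).comp hb).congr' (hab.mono fun _ h => h.symm))

section Recursion

variable {A : ℝ → ℝ} {K M ρ : ℝ} {y y' w w' : ℕ → ℝ}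

lemma abs_le_of_eq_mul_add (hA : ∀ u, |A u| ≤ M) (hy : ∀ i, |y i| ≤ 1)
    (hw : ∀ i, w i = K * y i + A (w (i + 1))) (i : ℕ) : |w i| ≤ |K| + M :=
  calc |w i| ≤ |K * y i| + |A (w (i + 1))| := hw i ▸ abs_add_le _ _
    _ ≤ |K| + M := by
      rw [abs_mul]
      gcongr
      · exact mul_le_of_le_one_right (abs_nonneg K) (hy i)
      · exact hA _

lemma abs_sub_le_mul_pow_of_eq_mul_add (hρ : 0 ≤ ρ) (hA : ∀ u, |A u| ≤ M)
    (hAρ : ∀ u v, |A u - A v| ≤ ρ * |u - v|) (hy : ∀ i, |y i| ≤ 1) (hy' : ∀ i, |y' i| ≤ 1)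
    (hw : ∀ i, w i = K * y i + A (w (i + 1))) (hw' : ∀ i, w' i = K * y' i + A (w' (i + 1)))
    {n : ℕ} (hyy' : ∀ i < n, y i = y' i) (k : ℕ) :
    |w k - w' k| ≤ 2 * (|K| + M) * ρ ^ (n - k) := by
  refine le_mul_pow_sub_of_le_mul_succ (d := fun i => |w i - w' i|) hρ (fun i => ?_)
    (fun i hi => ?_) k
  · calc |w i - w' i| ≤ |w i| + |w' i| := abs_sub _ _
      _ ≤ (|K| + M) + (|K| + M) :=
        add_le_add (abs_le_of_eq_mul_add hA hy hw i) (abs_le_of_eq_mul_add hA hy' hw' i)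
      _ = 2 * (|K| + M) := by ring
  · rw [hw i, hw' i, hyy' i hi, add_sub_add_left_eq_sub]
    exact hAρ _ _

end Recursion

lemma exists_abs_sub_le_mul_pow_of_contDiff {A : ℝ → ℝ} {K M ρ : ℝ} {Φ : ℝ × ℝ → ℝ}
    (hΦ : ContDiff ℝ 1 Φ) (hρ : ρ ∈ Ioo 0 1) (hA : ∀ u, |A u| ≤ M)
    (hAρ : ∀ u v, |A u - A v| ≤ ρ * |u - v|) :
    ∃ C, ∀ y y' w w' : ℕ → ℝ, (∀ i, |y i| ≤ 1) → (∀ i, |y' i| ≤ 1) →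
      (∀ i, w i = K * y i + A (w (i + 1))) → (∀ i, w' i = K * y' i + A (w' (i + 1))) →
      ∀ n, (∀ i < n, y i = y' i) → |Φ (w 0, w 1) - Φ (w' 0, w' 1)| ≤ C * ρ ^ n := by
  set R := |K| + M
  have hR : 0 ≤ R := add_nonneg (abs_nonneg K) ((abs_nonneg _).trans (hA 0))
  obtain ⟨L, hL⟩ := hΦ.contDiffOn.exists_lipschitzOnWith one_ne_zero (convex_closedBall 0 R)
    (isCompact_closedBall 0 R)
  have hmem : ∀ v x : ℕ → ℝ, (∀ i, |x i| ≤ 1) → (∀ i, v i = K * x i + A (v (i + 1))) →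
      (v 0, v 1) ∈ Metric.closedBall (0 : ℝ × ℝ) R := fun v x hx hv => by
    rw [mem_closedBall_zero_iff, Prod.norm_def, Real.norm_eq_abs, Real.norm_eq_abs]
    exact max_le (abs_le_of_eq_mul_add hA hx hv 0) (abs_le_of_eq_mul_add hA hx hv 1)
  refine ⟨L * (2 * R / ρ), fun y y' w w' hy hy' hw hw' n hyy' => ?_⟩
  have hdiff := abs_sub_le_mul_pow_of_eq_mul_add hρ.1.le hA hAρ hy hy' hw hw' hyy'
  have hdist : dist (w 0, w 1) (w' 0, w' 1) ≤ 2 * R * ρ ^ (n - 1) := by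
    rw [Prod.dist_eq, Real.dist_eq, Real.dist_eq]
    refine max_le ((hdiff 0).trans ?_) (hdiff 1)
    exact mul_le_mul_of_nonneg_left (pow_le_pow_of_le_one hρ.1.le hρ.2.le (by omega))
      (mul_nonneg zero_le_two hR)
  have hpow' : ρ ^ (n - 1) ≤ ρ ^ n / ρ := by
    rw [le_div_iff₀ hρ.1, ← pow_succ]
    exact pow_le_pow_of_le_one hρ.1.le hρ.2.le (by omega)
  calc |Φ (w 0, w 1) - Φ (w' 0, w' 1)| = dist (Φ (w 0, w 1)) (Φ (w' 0, w' 1)) :=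
        (Real.dist_eq _ _).symm
    _ ≤ L * dist (w 0, w 1) (w' 0, w' 1) :=
        hL.dist_le_mul _ (hmem w y hy hw) _ (hmem w' y' hy' hw')
    _ ≤ L * (2 * R * (ρ ^ n / ρ)) := by gcongr; exact hdist.trans (by gcongr)
    _ = L * (2 * R / ρ) * ρ ^ n := by ring

lemma contDiff_mul_cosh_mul_exp_div_cosh (c J : ℝ) :
    ContDiff ℝ 1 (fun z : ℝ × ℝ =>
      c * cosh z.1 * exp ((1 / 2) * log (4 * cosh (z.2 + J) * cosh (z.2 - J))) / cosh z.2) := by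
  have h4 : ∀ z : ℝ × ℝ, 4 * cosh (z.2 + J) * cosh (z.2 - J) ≠ 0 := fun z => by positivity
  have hc : ∀ z : ℝ × ℝ, cosh z.2 ≠ 0 := fun z => (cosh_pos _).ne'
  fun_prop (disch := assumption)

lemma log_one_sub_div_self_ne_zero {p : ℝ} (hp0 : 0 < p) (hp1 : p < 1) (hp : p ≠ 1 / 2) :
    log ((1 - p) / p) ≠ 0 :=
  log_ne_zero_of_pos_of_ne_one (div_pos (by linarith) hp0) fun h =>
    hp (by rw [div_eq_one_iff_eq hp0.ne'] at h; linarith)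

theorem stmt_14 (p : ℝ) (hp0 : 0 < p) (hp1 : p < 1) (hp2 : p ≠ 1 / 2)
    (J K lam : ℝ)
    (hJ : J = (1 / 2) * Real.log ((1 - p) / p))
    (A B : ℝ → ℝ)
    (hA : ∀ u, A u = (1 / 2) * Real.log (Real.cosh (u + J) / Real.cosh (u - J)))
    (hB : ∀ u, B u = (1 / 2) * Real.log (4 * Real.cosh (u + J) * Real.cosh (u - J)))
    (W : (ℕ → ℝ) → ℕ → ℕ → ℝ)
    (hWrec : ∀ (y : ℕ → ℝ) (n i : ℕ), i ≤ n → W y n i = K * y i + A (W y n (i + 1)))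
    (wlim : (ℕ → ℝ) → ℕ → ℝ)
    (hwlim : ∀ (y : ℕ → ℝ) (i : ℕ),
      Filter.Tendsto (fun n => W y n i) Filter.atTop (nhds (wlim y i)))
    (g : (ℕ → ℝ) → ℝ)
    (hg : ∀ y : ℕ → ℝ,
      g y = (1 / lam) * Real.cosh (wlim y 0) * Real.exp (B (wlim y 1))
              / Real.cosh (wlim y 1)) :
    ∃ C > (0 : ℝ), ∃ ρ ∈ Set.Ioo (0 : ℝ) 1,
      ∀ y ytil : ℕ → ℝ, (∀ i, y i = 1 ∨ y i = -1) → (∀ i, ytil i = 1 ∨ ytil i = -1) →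
        ∀ n : ℕ, (∀ i < n, y i = ytil i) → |g y - g ytil| ≤ C * ρ ^ n := by
  have hJ0 : J ≠ 0 := hJ ▸ mul_ne_zero (by norm_num) (log_one_sub_div_self_ne_zero hp0 hp1 hp2)
  obtain rfl : A = halfLogCoshRatio J := funext hA
  have hrec : ∀ y i, wlim y i = K * y i + halfLogCoshRatio J (wlim y (i + 1)) := fun y i =>
    eq_of_tendsto_of_eventually_eq (continuous_const.add (halfLogCoshRatio.continuous J))
      (hwlim y i) (hwlim y (i + 1)) (eventually_atTop.2 ⟨i, fun n hn => hWrec y n i hn⟩)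
  let Φ : ℝ × ℝ → ℝ := fun z =>
    1 / lam * cosh z.1 * exp ((1 / 2) * log (4 * cosh (z.2 + J) * cosh (z.2 - J))) / cosh z.2
  have hgΦ : ∀ y, g y = Φ (wlim y 0, wlim y 1) := fun y => by rw [hg, hB]
  have hρ := tanh_abs_mem_Ioo hJ0
  obtain ⟨C, hC⟩ := exists_abs_sub_le_mul_pow_of_contDiff (K := K)
    (contDiff_mul_cosh_mul_exp_div_cosh (1 / lam) J) hρ
    (halfLogCoshRatio.abs_le J) (halfLogCoshRatio.abs_sub_le J)
  have hsign : ∀ x : ℕ → ℝ, (∀ i, x i = 1 ∨ x i = -1) → ∀ i, |x i| ≤ 1 := fun x hx i => by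
    rcases hx i with h | h <;> simp [h]
  refine ⟨max C 1, by positivity, tanh |J|, hρ, fun y y' hy hy' n hyy' => ?_⟩
  rw [hgΦ, hgΦ]
  exact (hC y y' _ _ (hsign y hy) (hsign y' hy') (hrec y) (hrec y') n hyy').trans
    (mul_le_mul_of_nonneg_right (le_max_left C 1) (pow_nonneg hρ.1.le n))
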